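/- Let Ω be a metric space, (Ω, ℝ, σ) a flow on Ω, E a metric space, and φ : ℝ₊ × E × Ω → E a continuous cocycle over (Ω, ℝ, σ). Let ω₀ ∈ Ω be Poisson stable under (Ω, ℝ, σ), i.e., ω₀ ∈ ω_{ω₀} ∩ α_{ω₀}, and suppose there exists u₀ ∈ E such that the set {φ(t, u₀, ω₀) : t ≥ 0} has compact closure in E. Then there exists u ∈ E such that the point (u, ω₀) is Poisson stable in the positive direction under the skew-product semiflow π(t, (v, ω)) := (φ(t, v, ω), σ(t, ω)) on E × Ω, i.e., (u, ω₀) belongs to its own ω-limit set. -/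

import Mathlib

/-!
Write `F u` for the set of `v` such that `(v, ω₀)` lies in the ω-limit set of `(u, ω₀)`. It is
closed, and `v ∈ F u` implies `F v ⊆ F u` since ω-limit sets of a semiflow are closed and
invariant. When the trajectory of `u` is precompact, the recurrence of `ω₀` makes `F u` nonempty.
By Zorn's lemma and Cantor's intersection theorem there is a minimal nonempty closed set
`M ⊆ F u₀` with `F v ⊆ M` for every `v ∈ M`; minimality forces `F v = M ∋ v`.
-/

open Filter Topology NNReal Set

namespace Flow

variable {τ α : Type*} [TopologicalSpace τ] [AddMonoid τ] [TopologicalSpace α]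

-- Mathlib's `Flow.omegaLimit_omegaLimit` assumes `τ` is a group; invariance suffices.
theorem omegaLimit_omegaLimit_subset (f : Filter τ) (ϕ : Flow τ α) (s : Set α)
    (hf : ∀ t, Tendsto (t + ·) f f) : omegaLimit f ϕ (omegaLimit f ϕ s) ⊆ omegaLimit f ϕ s :=
  calc omegaLimit f ϕ (omegaLimit f ϕ s) ⊆ closure (image2 ϕ univ (omegaLimit f ϕ s)) :=
        omegaLimit_subset_closure_image2 _ _ _ univ_mem
    _ ⊆ closure (omegaLimit f ϕ s) :=
        closure_mono <| image2_subset_iff.2 fun t _ _ hx ↦ isInvariant_omegaLimit f ϕ s hf t hx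
    _ = omegaLimit f ϕ s := (isClosed_omegaLimit _ _ _).closure_eq

end Flow

theorem mem_omegaLimit_singleton_iff_exists_seq {τ α β : Type*} [TopologicalSpace β]
    [FirstCountableTopology β] {f : Filter τ} [IsCountablyGenerated f] [NeBot f]
    {ϕ : τ → α → β} {x : α} {y : β} :
    y ∈ omegaLimit f ϕ {x} ↔
      ∃ T : ℕ → τ, Tendsto T atTop f ∧ Tendsto (fun n ↦ ϕ (T n) x) atTop (𝓝 y) := by
  rw [mem_omegaLimit_singleton_iff_mapClusterPt]
  refine ⟨fun h ↦ ?_, fun ⟨T, hT, hϕT⟩ ↦ hϕT.mapClusterPt.of_comp hT⟩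
  obtain ⟨T, hϕT, hT⟩ := h.exists_seq_tendsto
  exact ⟨T, hT, hϕT⟩

theorem IsCompact.exists_mem_self_of_isClosed_of_trans {X : Type*} [TopologicalSpace X]
    {K : Set X} (hK : IsCompact K) (hKne : K.Nonempty) {F : X → Set X}
    (hclosed : ∀ x, IsClosed (F x)) (hne : ∀ x ∈ K, (F x).Nonempty) (hsub : ∀ x ∈ K, F x ⊆ K)
    (htrans : ∀ x, ∀ y ∈ F x, F y ⊆ F x) : ∃ x, x ∈ F x := by
  -- A minimal closed `F`-invariant subset `M` of `K` equals `F x` for each of its points `x`.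
  let S := {C : Set X | C.Nonempty ∧ IsClosed C ∧ C ⊆ K ∧ ∀ x ∈ C, F x ⊆ C}
  have hFS : ∀ x ∈ K, F x ∈ S := fun x hx ↦ ⟨hne x hx, hclosed x, hsub x hx, htrans x⟩
  have hchain : ∀ c ⊆ S, IsChain (· ⊆ ·) c → c.Nonempty → ∃ lb ∈ S, ∀ C ∈ c, lb ⊆ C := by
    intro c hcS hc ⟨C₀, hC₀⟩
    have : Nonempty c := ⟨⟨C₀, hC₀⟩⟩
    refine ⟨⋂₀ c, ⟨?_, isClosed_sInter fun C hC ↦ (hcS hC).2.1,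
      (sInter_subset_of_mem hC₀).trans (hcS hC₀).2.2.1,
      fun x hx ↦ subset_sInter fun C hC ↦ (hcS hC).2.2.2 x (hx C hC)⟩,
      fun C ↦ sInter_subset_of_mem⟩
    exact IsCompact.nonempty_sInter_of_directed_nonempty_isCompact_isClosed
      (IsChain.directedOn (r := fun C D : Set X ↦ C ⊇ D) hc.symm) (fun C hC ↦ (hcS hC).1)
      (fun C hC ↦ hK.of_isClosed_subset (hcS hC).2.1 (hcS hC).2.2.1) (fun C hC ↦ (hcS hC).2.1)
  obtain ⟨x₀, hx₀⟩ := hKne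
  obtain ⟨M, -, hM⟩ := zorn_superset_nonempty S hchain (F x₀) (hFS x₀ hx₀)
  obtain ⟨x, hxM⟩ := hM.prop.1
  have hFx : F x = M := hM.eq_of_subset (hFS x (hM.prop.2.2.1 hxM)) (hM.prop.2.2.2 x hxM)
  exact ⟨x, hFx ▸ hxM⟩

theorem NNReal.tendsto_const_add_atTop (t : ℝ≥0) : Tendsto (t + ·) atTop atTop :=
  tendsto_atTop_mono (fun _ ↦ le_add_self) tendsto_id

namespace Flow

variable {E Ω : Type*} [TopologicalSpace E] [TopologicalSpace Ω]

def skewProduct (σ : Flow ℝ Ω) (φ : ℝ≥0 → E → Ω → E)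
    (hcont : Continuous fun p : ℝ≥0 × E × Ω => φ p.1 p.2.1 p.2.2)
    (hzero : ∀ u ω, φ 0 u ω = u)
    (hadd : ∀ (t τ : ℝ≥0) u ω, φ (t + τ) u ω = φ t (φ τ u ω) (σ τ ω)) : Flow ℝ≥0 (E × Ω) where
  toFun t x := (φ t x.1 x.2, σ t x.2)
  cont' := hcont.prodMk (σ.continuous (by fun_prop) (by fun_prop))
  map_add' t τ x := by simp [hadd, σ.map_add]
  map_zero' x := by simp [hzero, σ.map_zero_apply]

def omegaLimitFiber (π : Flow ℝ≥0 (E × Ω)) (ω₀ : Ω) (u : E) : Set E :=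
  (·, ω₀) ⁻¹' omegaLimit atTop π {(u, ω₀)}

variable (π : Flow ℝ≥0 (E × Ω)) (ω₀ : Ω)

theorem isClosed_omegaLimitFiber (u : E) : IsClosed (π.omegaLimitFiber ω₀ u) :=
  (isClosed_omegaLimit _ _ _).preimage (continuous_id.prodMk continuous_const)

theorem omegaLimitFiber_subset_of_mem {u v : E} (h : v ∈ π.omegaLimitFiber ω₀ u) :
    π.omegaLimitFiber ω₀ v ⊆ π.omegaLimitFiber ω₀ u := by
  intro w hw
  have hsub : {(v, ω₀)} ⊆ omegaLimit atTop π {(u, ω₀)} := singleton_subset_iff.2 h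
  exact π.omegaLimit_omegaLimit_subset atTop _ NNReal.tendsto_const_add_atTop
    (omegaLimit_mono_right atTop π hsub hw)

variable {σ : Flow ℝ Ω} {φ : ℝ≥0 → E → Ω → E}
  {hcont : Continuous fun p : ℝ≥0 × E × Ω => φ p.1 p.2.1 p.2.2} {hzero : ∀ u ω, φ 0 u ω = u}
  {hadd : ∀ (t τ : ℝ≥0) u ω, φ (t + τ) u ω = φ t (φ τ u ω) (σ τ ω)}

theorem mem_closure_range_of_mem_omegaLimitFiber {u v : E}
    (hv : v ∈ (σ.skewProduct φ hcont hzero hadd).omegaLimitFiber ω₀ u) (t : ℝ≥0) :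
    φ t v ω₀ ∈ closure (range fun s ↦ φ s u ω₀) := by
  set π := σ.skewProduct φ hcont hzero hadd
  have hπt : π t (v, ω₀) ∈ closure (image2 π univ {(u, ω₀)}) :=
    omegaLimit_subset_closure_image2 _ _ _ univ_mem <| isInvariant_omegaLimit _ _ _
      NNReal.tendsto_const_add_atTop t hv
  refine map_mem_closure (f := Prod.fst) continuous_fst hπt ?_
  rintro _ ⟨s, -, _, rfl, rfl⟩
  exact ⟨s, rfl⟩

theorem nonempty_omegaLimitFiber_skewProduct [FirstCountableTopology E]
    [FirstCountableTopology Ω] (hω₀ : ω₀ ∈ omegaLimit atTop σ {ω₀}) {K : Set E}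
    (hK : IsCompact K) {u : E} (hu : ∀ t, φ t u ω₀ ∈ K) :
    ((σ.skewProduct φ hcont hzero hadd).omegaLimitFiber ω₀ u).Nonempty := by
  obtain ⟨T, hT, hσT⟩ := mem_omegaLimit_singleton_iff_exists_seq.1 hω₀
  set T' : ℕ → ℝ≥0 := fun n ↦ (T n).toNNReal
  have hT' : Tendsto T' atTop atTop := tendsto_real_toNNReal_atTop.comp hT
  have hσT' : Tendsto (fun n ↦ σ (T' n) ω₀) atTop (𝓝 ω₀) :=
    hσT.congr' <| (hT.eventually_ge_atTop 0).mono fun n hn ↦ by simp [T', hn]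
  obtain ⟨v, -, ψ, hψ, hφψ⟩ := hK.tendsto_subseq fun n ↦ hu (T' n)
  exact ⟨v, mem_omegaLimit_singleton_iff_exists_seq.2
    ⟨T' ∘ ψ, hT'.comp hψ.tendsto_atTop, hφψ.prodMk_nhds (hσT'.comp hψ.tendsto_atTop)⟩⟩

end Flow

theorem skew_product_has_poisson_stable_point_general {Ω E : Type*}
    [MetricSpace Ω] [MetricSpace E]
    (σ : ℝ → Ω → Ω)
    (hσcont : Continuous fun p : ℝ × Ω => σ p.1 p.2)
    (hσid : ∀ ω : Ω, σ 0 ω = ω)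
    (hσadd : ∀ (t τ : ℝ) (ω : Ω), σ (t + τ) ω = σ t (σ τ ω))
    (φ : ℝ≥0 → E → Ω → E)
    (hφcont : Continuous fun p : ℝ≥0 × E × Ω => φ p.1 p.2.1 p.2.2)
    (hφid : ∀ (u : E) (ω : Ω), φ 0 u ω = u)
    (hφadd : ∀ (t τ : ℝ≥0) (u : E) (ω : Ω),
      φ (t + τ) u ω = φ t (φ τ u ω) (σ (τ : ℝ) ω))
    (ω₀ : Ω)
    (hω : ∃ T : ℕ → ℝ, Tendsto T atTop atTop ∧
      Tendsto (fun n => σ (T n) ω₀) atTop (𝓝 ω₀))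
    (u₀ : E)
    (hb : IsCompact (closure (Set.range fun t : ℝ≥0 => φ t u₀ ω₀))) :
    ∃ u : E, ∃ T : ℕ → ℝ≥0, Tendsto T atTop atTop ∧
      Tendsto (fun n => ((φ (T n) u ω₀, σ ((T n : ℝ≥0) : ℝ) ω₀) : E × Ω)) atTop
        (𝓝 ((u, ω₀) : E × Ω)) := by
  let σ' : Flow ℝ Ω := ⟨σ, hσcont, hσadd, hσid⟩
  let π := σ'.skewProduct φ hφcont hφid hφadd
  have hω₀ : ω₀ ∈ omegaLimit atTop σ' {ω₀} := mem_omegaLimit_singleton_iff_exists_seq.2 hω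
  have hφK : ∀ v ∈ π.omegaLimitFiber ω₀ u₀, ∀ t, φ t v ω₀ ∈ closure (range fun s ↦ φ s u₀ ω₀) :=
    fun _ hv ↦ Flow.mem_closure_range_of_mem_omegaLimitFiber ω₀ hv
  have hsub : π.omegaLimitFiber ω₀ u₀ ⊆ closure (range fun t ↦ φ t u₀ ω₀) := fun v hv ↦ by
    simpa only [hφid] using hφK v hv 0
  obtain ⟨u, hu⟩ := (hb.of_isClosed_subset (π.isClosed_omegaLimitFiber ω₀ u₀) hsub)
    |>.exists_mem_self_of_isClosed_of_trans
      (Flow.nonempty_omegaLimitFiber_skewProduct ω₀ hω₀ hb fun t ↦ subset_closure ⟨t, rfl⟩)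
      (π.isClosed_omegaLimitFiber ω₀)
      (fun v hv ↦ Flow.nonempty_omegaLimitFiber_skewProduct ω₀ hω₀ hb (hφK v hv))
      (fun _ ↦ π.omegaLimitFiber_subset_of_mem ω₀)
      (fun _ _ ↦ π.omegaLimitFiber_subset_of_mem ω₀)
  obtain ⟨T, hT, hπT⟩ := mem_omegaLimit_singleton_iff_exists_seq.1 hu
  exact ⟨u, T, hT, hπT⟩

/-- Let `φ` be a continuous cocycle over a flow `(Ω, ℝ, σ)` with fiber a metric space
`E`. If `ω₀ ∈ Ω` is Poisson stable and some trajectory `{φ(t, u₀, ω₀) : t ≥ 0}` has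
compact closure in `E`, then there exists `u ∈ E` such that `(u, ω₀)` is Poisson stable
in the positive direction under the skew-product semiflow
`π(t, (v, ω)) = (φ(t, v, ω), σ(t, ω))`, i.e. `(u, ω₀)` belongs to its own ω-limit set. -/
theorem skew_product_has_poisson_stable_point {Ω E : Type*}
    [MetricSpace Ω] [MetricSpace E]
    (σ : ℝ → Ω → Ω)
    (hσcont : Continuous fun p : ℝ × Ω => σ p.1 p.2)
    (hσid : ∀ ω : Ω, σ 0 ω = ω)
    (hσadd : ∀ (t τ : ℝ) (ω : Ω), σ (t + τ) ω = σ t (σ τ ω))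
    (φ : ℝ≥0 → E → Ω → E)
    (hφcont : Continuous fun p : ℝ≥0 × E × Ω => φ p.1 p.2.1 p.2.2)
    (hφid : ∀ (u : E) (ω : Ω), φ 0 u ω = u)
    (hφadd : ∀ (t τ : ℝ≥0) (u : E) (ω : Ω),
      φ (t + τ) u ω = φ t (φ τ u ω) (σ (τ : ℝ) ω))
    (ω₀ : Ω)
    (hω : ∃ T : ℕ → ℝ, Tendsto T atTop atTop ∧
      Tendsto (fun n => σ (T n) ω₀) atTop (𝓝 ω₀))
    (hα : ∃ T : ℕ → ℝ, Tendsto T atTop atBot ∧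
      Tendsto (fun n => σ (T n) ω₀) atTop (𝓝 ω₀))
    (u₀ : E)
    (hb : IsCompact (closure (Set.range fun t : ℝ≥0 => φ t u₀ ω₀))) :
    ∃ u : E, ∃ T : ℕ → ℝ≥0, Tendsto T atTop atTop ∧
      Tendsto (fun n => ((φ (T n) u ω₀, σ ((T n : ℝ≥0) : ℝ) ω₀) : E × Ω)) atTop
        (𝓝 ((u, ω₀) : E × Ω)) :=
  skew_product_has_poisson_stable_point_general σ hσcont hσid hσadd φ hφcont hφid hφadd ω₀ hω u₀ hb
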